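/- arXiv:2410.03367 — 2 statements merged into one kernel-verified Lean document; each statement's English description precedes it below -/
import Mathlib

section
/- The function f(r) := Θ(1,r) = exp((r·log r − r + 1)/(r − 1)) for r > 0, r ≠ 1, with f(1) = 1 and f(0) = 1/e, is concave and strictly increasing on [0,∞). -/
noncomputable def f (r : ℝ) : ℝ :=
  if r = 0 then (Real.exp 1)⁻¹
  else if r = 1 then 1
  else Real.exp ((r * Real.log r - r + 1) / (r - 1))

noncomputable def g (s : ℝ) : ℝ :=
  if (Real.exp 1)⁻¹ < s then Function.invFunOn f (Set.Ici 0) s else 0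

noncomputable def Xi (a c : ℝ) : ℝ :=
  if a = 0 then Real.exp 1 * c else a * g (c / a)

/-!
For `r > 0` one has `log f(r) = logMean r = ∫₀¹ log (1 - t + t r) dt`, the mean of `log` along
the segment from `1` to `r`. Differentiating under the integral sign, `logMean' = ∫₀¹ φ` and
`logMean'' = -∫₀¹ φ²` with `φ(t) = t / (1 - t + t r) > 0`. Hence `f' = f ∫ φ > 0` and
`f'' = f ((∫ φ)² - ∫ φ²) ≤ 0`, the last inequality being Jensen's: the variance of `φ` under the
uniform measure on `[0, 1]` is nonnegative. At `r = 0` the closed form is continuous because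
`r log r → 0`.
-/

open Real Set MeasureTheory ProbabilityTheory Filter
open scoped Interval Topology

theorem sq_integral_le_integral_sq {Ω : Type*} [MeasurableSpace Ω] {μ : Measure Ω}
    [IsProbabilityMeasure μ] {X : Ω → ℝ} (hX : MemLp X 2 μ) :
    (∫ ω, X ω ∂μ) ^ 2 ≤ ∫ ω, X ω ^ 2 ∂μ := by
  have := variance_nonneg X μ
  rw [variance_eq_sub hX] at this
  simpa using this

theorem sq_intervalIntegral_le_intervalIntegral_sq {φ : ℝ → ℝ} (hφ : ContinuousOn φ (Icc 0 1)) :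
    (∫ t in (0:ℝ)..1, φ t) ^ 2 ≤ ∫ t in (0:ℝ)..1, φ t ^ 2 := by
  have : IsProbabilityMeasure (volume.restrict (Ioc (0:ℝ) 1)) := ⟨by simp⟩
  simp only [intervalIntegral.integral_of_le zero_le_one]
  obtain ⟨C, hC⟩ := isCompact_Icc.exists_bound_of_continuousOn hφ
  refine sq_integral_le_integral_sq <| MemLp.of_bound
    ((hφ.mono Ioc_subset_Icc_self).aestronglyMeasurable measurableSet_Ioc) C ?_
  exact (ae_restrict_mem measurableSet_Ioc).mono fun t ht => hC t (Ioc_subset_Icc_self ht)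

theorem one_sub_add_mul_mem_Icc {t x a b : ℝ} (ht : t ∈ Icc (0:ℝ) 1) (hx : x ∈ Icc a b) :
    1 - t + t * x ∈ Icc (min 1 a) (max 1 b) := by
  obtain ⟨ht0, ht1⟩ := ht
  obtain ⟨hax, hxb⟩ := hx
  constructor
  · nlinarith [min_le_left 1 a, min_le_right 1 a]
  · nlinarith [le_max_left 1 b, le_max_right 1 b]

theorem one_sub_add_mul_pos {t x : ℝ} (ht : t ∈ Icc (0:ℝ) 1) (hx : 0 < x) :
    0 < 1 - t + t * x :=
  (lt_min one_pos hx).trans_le (one_sub_add_mul_mem_Icc ht ⟨le_rfl, le_rfl⟩).1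

theorem hasDerivAt_integral_pow_mul_comp_affine {G G' : ℝ → ℝ} (k : ℕ)
    (hG : ∀ u, 0 < u → HasDerivAt G (G' u) u) (hG' : ContinuousOn G' (Ioi 0))
    {r : ℝ} (hr : 0 < r) :
    HasDerivAt (fun x => ∫ t in (0:ℝ)..1, t ^ k * G (1 - t + t * x))
      (∫ t in (0:ℝ)..1, t ^ (k + 1) * G' (1 - t + t * r)) r := by
  -- For `x ∈ (r/2, 2r)` and `t ∈ [0, 1]`, `1 - t + t x` stays in a compact subset of `(0, ∞)`.
  have hK : Icc (min 1 (r / 2)) (max 1 (2 * r)) ⊆ Ioi 0 := fun u hu =>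
    (lt_min one_pos (half_pos hr)).trans_le hu.1
  obtain ⟨C, hC⟩ := isCompact_Icc.exists_bound_of_continuousOn (hG'.mono hK)
  have hs : Ioo (r / 2) (2 * r) ∈ 𝓝 r := Ioo_mem_nhds (by linarith) (by linarith)
  have hΙ : Ι (0:ℝ) 1 ⊆ Icc 0 1 := by
    rw [uIoc_of_le zero_le_one]
    exact Ioc_subset_Icc_self
  have hcont : ∀ {F : ℝ → ℝ}, ContinuousOn F (Ioi 0) → ∀ {x : ℝ}, 0 < x → (n : ℕ) →
      ContinuousOn (fun t => t ^ n * F (1 - t + t * x)) (Icc 0 1) := fun hF x hx n =>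
    (continuous_pow n).continuousOn.mul
      (hF.comp (by fun_prop) fun t ht => one_sub_add_mul_pos ht hx)
  have hmeas : ∀ {F : ℝ → ℝ}, ContinuousOn F (Ioi 0) → ∀ {x : ℝ}, 0 < x → (n : ℕ) →
      AEStronglyMeasurable (fun t => t ^ n * F (1 - t + t * x)) (volume.restrict (Ι 0 1)) :=
    fun hF x hx n => ((hcont hF hx n).mono hΙ).aestronglyMeasurable measurableSet_uIoc
  have hGc : ContinuousOn G (Ioi 0) := fun u hu => (hG u hu).continuousAt.continuousWithinAt
  refine (intervalIntegral.hasDerivAt_integral_of_dominated_loc_of_deriv_le (bound := fun _ => C)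
    (F := fun x t => t ^ k * G (1 - t + t * x))
    (F' := fun x t => t ^ (k + 1) * G' (1 - t + t * x))
    hs ?_ ((hcont hGc hr k).intervalIntegrable_of_Icc zero_le_one) (hmeas hG' hr (k + 1)) ?_
    intervalIntegrable_const ?_).2
  · filter_upwards [Ioi_mem_nhds hr] with x hx using hmeas hGc hx k
  · refine ae_of_all _ fun t ht x hx => ?_
    obtain ⟨ht0, ht1⟩ := hΙ ht
    rw [norm_mul, norm_pow, Real.norm_of_nonneg ht0]
    exact (mul_le_of_le_one_left (norm_nonneg _) (pow_le_one₀ ht0 ht1)).trans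
      (hC _ (one_sub_add_mul_mem_Icc (hΙ ht) (Ioo_subset_Icc_self hx)))
  · refine ae_of_all _ fun t ht x hx => ?_
    have hu := hG _ (one_sub_add_mul_pos (hΙ ht) ((half_pos hr).trans hx.1))
    have haff : HasDerivAt (fun y => 1 - t + t * y) t x := by
      simpa using ((hasDerivAt_id x).const_mul t).const_add (1 - t)
    exact ((hu.comp x haff).const_mul (t ^ k)).congr_deriv (by ring)

noncomputable def logMean (r : ℝ) : ℝ := ∫ t in (0:ℝ)..1, log (1 - t + t * r)

noncomputable def logMeanDeriv (r : ℝ) : ℝ := ∫ t in (0:ℝ)..1, t / (1 - t + t * r)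

theorem logMean_eq {r : ℝ} (hr1 : r ≠ 1) : logMean r = (r * log r - r + 1) / (r - 1) := by
  have h : ∀ t : ℝ, 1 - t + t * r = (r - 1) * t + 1 := fun t => by ring
  simp only [logMean, h]
  rw [intervalIntegral.integral_comp_mul_add (fun x => log x) (sub_ne_zero.2 hr1), integral_log]
  simp
  field_simp

theorem logMean_one : logMean 1 = 0 := by
  simp [logMean]

theorem f_eq_exp_logMean {r : ℝ} (hr : 0 < r) : f r = exp (logMean r) := by
  by_cases h1 : r = 1
  · simp [f, h1, logMean_one]
  · rw [f, if_neg hr.ne', if_neg h1, logMean_eq h1]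

theorem hasDerivAt_logMean {r : ℝ} (hr : 0 < r) : HasDerivAt logMean (logMeanDeriv r) r := by
  convert hasDerivAt_integral_pow_mul_comp_affine 0 (fun u hu => hasDerivAt_log hu.ne')
    (continuousOn_inv₀.mono fun _ hu => ne_of_gt hu) hr using 1
  · funext x
    simp only [logMean, pow_zero, one_mul]
  · simp only [logMeanDeriv, zero_add, pow_one, div_eq_mul_inv]

theorem hasDerivAt_logMeanDeriv {r : ℝ} (hr : 0 < r) :
    HasDerivAt logMeanDeriv (-∫ t in (0:ℝ)..1, (t / (1 - t + t * r)) ^ 2) r := by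
  convert hasDerivAt_integral_pow_mul_comp_affine 1 (fun u hu => hasDerivAt_inv hu.ne')
    (fun _ hu => ((continuous_pow 2).continuousAt.inv₀ (pow_pos hu 2).ne').neg.continuousWithinAt)
    hr using 1
  · funext x
    simp only [logMeanDeriv, pow_one, div_eq_mul_inv]
  · rw [← intervalIntegral.integral_neg]
    congr 1 with t
    rw [div_pow, div_eq_mul_inv, mul_neg]

theorem continuousOn_div_one_sub_add_mul {r : ℝ} (hr : 0 < r) :
    ContinuousOn (fun t => t / (1 - t + t * r)) (Icc 0 1) :=
  continuousOn_id.div (by fun_prop) fun t ht => (one_sub_add_mul_pos ht hr).ne'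

theorem logMeanDeriv_pos {r : ℝ} (hr : 0 < r) : 0 < logMeanDeriv r :=
  intervalIntegral.intervalIntegral_pos_of_pos_on
    ((continuousOn_div_one_sub_add_mul hr).intervalIntegrable_of_Icc zero_le_one)
    (fun _ ht => div_pos ht.1 (one_sub_add_mul_pos (Ioo_subset_Icc_self ht) hr)) zero_lt_one

theorem logMeanDeriv_sq_le {r : ℝ} (hr : 0 < r) :
    logMeanDeriv r ^ 2 ≤ ∫ t in (0:ℝ)..1, (t / (1 - t + t * r)) ^ 2 :=
  sq_intervalIntegral_le_intervalIntegral_sq (continuousOn_div_one_sub_add_mul hr)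

theorem hasDerivAt_f {r : ℝ} (hr : 0 < r) :
    HasDerivAt f (exp (logMean r) * logMeanDeriv r) r :=
  (hasDerivAt_logMean hr).exp.congr_of_eventuallyEq <|
    eventually_of_mem (Ioi_mem_nhds hr) fun _ hx => f_eq_exp_logMean hx

theorem hasDerivAt_exp_logMean_mul_logMeanDeriv {r : ℝ} (hr : 0 < r) :
    HasDerivAt (fun x => exp (logMean x) * logMeanDeriv x)
      (exp (logMean r) * (logMeanDeriv r ^ 2 - ∫ t in (0:ℝ)..1, (t / (1 - t + t * r)) ^ 2)) r :=
  ((hasDerivAt_logMean hr).exp.mul (hasDerivAt_logMeanDeriv hr)).congr_deriv (by ring)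

-- Also covers `x = 0`, where `log 0 = 0` makes the right-hand side `exp (-1)`.
theorem f_eq_exp_of_lt_one {x : ℝ} (hx0 : 0 ≤ x) (hx1 : x < 1) :
    f x = exp ((x * log x - x + 1) / (x - 1)) := by
  rcases hx0.eq_or_lt with rfl | hx0
  · simp [f, exp_neg]
  · rw [f, if_neg hx0.ne', if_neg hx1.ne]

theorem continuousOn_f : ContinuousOn f (Ici 0) := by
  intro x hx
  rcases (mem_Ici.1 hx).eq_or_lt with rfl | hx
  · have hcont : ContinuousAt (fun x => exp ((x * log x - x + 1) / (x - 1))) 0 := by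
      refine continuous_exp.continuousAt.comp (ContinuousAt.div ?_ (by fun_prop) (by norm_num))
      exact (continuous_mul_log.sub continuous_id).add continuous_const |>.continuousAt
    refine hcont.continuousWithinAt.congr_of_eventuallyEq ?_
      (f_eq_exp_of_lt_one le_rfl zero_lt_one)
    exact eventually_of_mem (Ico_mem_nhdsGE zero_lt_one) fun y hy => f_eq_exp_of_lt_one hy.1 hy.2
  · exact (hasDerivAt_f hx).continuousAt.continuousWithinAt

/-- `f` is concave and strictly increasing on `[0, ∞)`. -/
theorem f_concave_strictMono :
    ConcaveOn ℝ (Set.Ici (0:ℝ)) f ∧ StrictMonoOn f (Set.Ici (0:ℝ)) := by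
  have hpos : ∀ x ∈ interior (Ici (0:ℝ)), 0 < x := fun x hx => by rwa [interior_Ici] at hx
  have hf' : ∀ x ∈ interior (Ici (0:ℝ)),
      HasDerivWithinAt f (exp (logMean x) * logMeanDeriv x) (interior (Ici 0)) x :=
    fun x hx => (hasDerivAt_f (hpos x hx)).hasDerivWithinAt
  refine ⟨concaveOn_of_hasDerivWithinAt2_nonpos (convex_Ici 0) continuousOn_f hf'
      (fun x hx => (hasDerivAt_exp_logMean_mul_logMeanDeriv (hpos x hx)).hasDerivWithinAt)
      fun x hx => ?_,
    strictMonoOn_of_hasDerivWithinAt_pos (convex_Ici 0) continuousOn_f hf'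
      fun x hx => mul_pos (exp_pos _) (logMeanDeriv_pos (hpos x hx))⟩
  exact mul_nonpos_of_nonneg_of_nonpos (exp_pos _).le
    (sub_nonpos.2 (logMeanDeriv_sq_le (hpos x hx)))
end

section
/- Upper chain rule: for a ≥ 0 and c > 0, setting b = Ξ(a,c), one has (b − a)·log c ≥ H(b) − H(a), where H(x) = x log x − x + 1 (H(0) = 1); moreover equality holds whenever c ≥ a/e. -/
noncomputable def H (x : ℝ) : ℝ := x * Real.log x - x + 1

/-!
`log f(r)` is the slope of `H` between `1` and `r` (with `H 1 = 0`, `H' 1 = log 1 = 0`), so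
`f = exp ∘ dslope H 1` and `(r - 1) log f(r) = H r`. Since `H (a r) - H a = a H r + (a r - a) log a`,
every representation `c = a f(r)` gives the chain rule with equality for `b = a r`. As `dslope H 1`
is continuous, `f 0 = 1/e` and `f r ≥ r / e`, the intermediate value theorem makes `g` a right
inverse of `f` on `(1/e, ∞)`; for `c ≤ a/e` one has `Ξ(a, c) = 0` and the inequality reduces to
`log c ≤ log a - 1`.
-/

open Real Set InformationTheory

lemma H_eq_klFun : H = klFun := by
  ext x
  simp only [H, klFun]
  ring

lemma H_one : H 1 = 0 := by
  simp [H]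

lemma H_mul_sub_H {a : ℝ} (ha : a ≠ 0) (r : ℝ) :
    H (a * r) - H a = a * H r + (a * r - a) * log a := by
  rcases eq_or_ne r 0 with rfl | hr
  · simp only [H, mul_zero, log_zero]
    ring
  · simp only [H, log_mul ha hr]
    ring

lemma H_exp_one_mul_sub_H_zero (c : ℝ) :
    (exp 1 * c - 0) * log c = H (exp 1 * c) - H 0 := by
  rcases eq_or_ne c 0 with rfl | hc
  · simp
  · simp only [H, log_mul (exp_ne_zero 1) hc, log_exp, log_zero]
    ring

lemma H_zero_sub_H_le {a c : ℝ} (ha : 0 < a) (hc : 0 < c) (hca : c ≤ a / exp 1) :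
    H 0 - H a ≤ (0 - a) * log c := by
  have hlog : log c ≤ log a - 1 := by
    simpa [log_div ha.ne' (exp_ne_zero 1)] using log_le_log hc hca
  simp only [H, log_zero]
  nlinarith

lemma dslope_H_one_eq (r : ℝ) : dslope H 1 r = H r / (r - 1) := by
  rcases eq_or_ne r 1 with rfl | hr
  · rw [dslope_same, H_eq_klFun, deriv_klFun, log_one, sub_self, div_zero]
  · rw [dslope_of_ne _ hr, slope_def_field, H_one, sub_zero]

lemma continuous_dslope_H_one : Continuous (dslope H 1) := by
  rw [← continuousOn_univ, continuousOn_dslope Filter.univ_mem, H_eq_klFun]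
  exact ⟨continuous_klFun.continuousOn, (hasDerivAt_klFun one_ne_zero).differentiableAt⟩

lemma f_eq_exp_dslope (r : ℝ) : f r = exp (dslope H 1 r) := by
  rw [dslope_H_one_eq]
  unfold f
  split_ifs with h0 h1
  · simp [h0, H, exp_neg]
  · simp [h1]
  · rfl

lemma f_zero : f 0 = (exp 1)⁻¹ := by
  simp [f]

lemma continuous_f : Continuous f :=
  (continuous_exp.comp continuous_dslope_H_one).congr fun r => (f_eq_exp_dslope r).symm

lemma div_exp_one_le_f {r : ℝ} (hr : 1 < r) : r / exp 1 ≤ f r := by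
  have hslope : log r - 1 ≤ H r / (r - 1) := by
    rw [le_div_iff₀ (sub_pos.mpr hr)]
    have hlog := log_nonneg hr.le
    simp only [H]
    nlinarith
  calc r / exp 1 = exp (log r - 1) := by rw [exp_sub, exp_log (by linarith)]
    _ ≤ exp (H r / (r - 1)) := exp_le_exp.mpr hslope
    _ = f r := by rw [f_eq_exp_dslope, dslope_H_one_eq]

lemma surjOn_f : SurjOn f (Ici 0) (Ici (exp 1)⁻¹) := by
  intro s hs
  have hs0 : 0 < s := lt_of_lt_of_le (by positivity) hs
  set x := exp 1 * s + 1
  have hx : 1 < x := by simp only [x]; linarith [mul_pos (exp_pos 1) hs0]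
  have hfx : s ≤ f x := by
    refine le_trans ?_ (div_exp_one_le_f hx)
    rw [le_div_iff₀ (exp_pos 1)]
    simp only [x]
    linarith
  obtain ⟨r, hr, hfr⟩ := intermediate_value_Icc (by linarith) continuous_f.continuousOn
    ⟨f_zero ▸ hs, hfx⟩
  exact ⟨r, hr.1, hfr⟩

lemma f_g {s : ℝ} (hs : (exp 1)⁻¹ < s) : f (g s) = s := by
  rw [g, if_pos hs]
  exact Function.invFunOn_eq (surjOn_f hs.le)

lemma sub_mul_log_mul_f {a : ℝ} (ha : a ≠ 0) (r : ℝ) :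
    (a * r - a) * log (a * f r) = H (a * r) - H a := by
  have hslope : (r - 1) * dslope H 1 r = H r := by
    simpa [H_one] using sub_smul_dslope H 1 r
  rw [H_mul_sub_H ha, log_mul ha (by rw [f_eq_exp_dslope]; exact exp_ne_zero _),
    f_eq_exp_dslope, log_exp, ← hslope]
  ring

/-- Upper chain rule: for `a ≥ 0`, `c > 0` and `b = Ξ(a,c)`, one has
`(b - a) * log c ≥ H(b) - H(a)`, with equality whenever `c ≥ a / e`. -/
theorem upper_chain_rule (a : ℝ) (ha : 0 ≤ a) (c : ℝ) (hc : 0 < c) :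
    H (Xi a c) - H a ≤ (Xi a c - a) * Real.log c ∧
    (a / Real.exp 1 ≤ c → (Xi a c - a) * Real.log c = H (Xi a c) - H a) := by
  rcases ha.eq_or_lt with rfl | ha
  · have h := H_exp_one_mul_sub_H_zero c
    rw [Xi, if_pos rfl]
    exact ⟨h.ge, fun _ => h⟩
  have hXi : Xi a c = a * g (c / a) := if_neg ha.ne'
  have hc_eq : a * (c / a) = c := mul_div_cancel₀ c ha.ne'
  by_cases hca : (exp 1)⁻¹ < c / a
  · have h := sub_mul_log_mul_f ha.ne' (g (c / a))
    rw [f_g hca, hc_eq, ← hXi] at h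
    exact ⟨h.ge, fun _ => h⟩
  have hcae : c ≤ a / exp 1 := by
    rwa [not_lt, div_le_iff₀ ha, ← div_eq_inv_mul] at hca
  rw [hXi, g, if_neg hca, mul_zero]
  refine ⟨H_zero_sub_H_le ha hc hcae, fun hace => ?_⟩
  have h := sub_mul_log_mul_f ha.ne' 0
  rwa [f_zero, mul_zero, ← div_eq_mul_inv, ← le_antisymm hcae hace] at h
end
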